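/- Let Γ, Γ' be simple subsystems of a finite root system Φ with W_{Γ'} ⊆ W_Γ and Φ_{Γ',+} ⊆ Φ_{Γ,+}. Then the fundamental chamber of Γ' is the union over all w in the set of minimal length left coset representatives {w ∈ W_Γ : w⁻¹(Γ') ⊆ Φ_{W_Γ,+}} of the images w(C_Γ) of the fundamental chamber of Γ: C_{Γ'} = ⋃_w w(C_Γ). -/

import Mathlib

open scoped RealInnerProductSpace

variable {V : Type*} [NormedAddCommGroup V] [InnerProductSpace ℝ V] [FiniteDimensional ℝ V]

/-- Orthogonal reflection in the (nonzero) vector `α`. -/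
noncomputable def sref (α : V) : V ≃ₗᵢ[ℝ] V := Submodule.reflection (ℝ ∙ α)ᗮ

/-- The cone of nonnegative linear combinations of a finite set `Pi`. -/
def posCone (Pi : Finset V) : Set V :=
  {v | ∃ c : V → ℝ, (∀ x, 0 ≤ c x) ∧ v = ∑ x ∈ Pi, c x • x}

/-- The reflection group generated by the reflections in the roots of `Φ`. -/
noncomputable def Wgroup (Φ : Set V) : Subgroup (V ≃ₗᵢ[ℝ] V) :=
  Subgroup.closure {g | ∃ α ∈ Φ, g = sref α}

/-- The fundamental chamber of the reflection subgroup (given as a set of isometries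
`Wsub`), with respect to its positive system inherited from `Φ₊ = Φ ∩ posCone Pi`. -/
def chamber (Φ : Set V) (Pi : Finset V) (Wsub : Set (V ≃ₗᵢ[ℝ] V)) : Set V :=
  {u | ∀ α ∈ Φ, sref α ∈ Wsub → α ∈ posCone Pi → 0 ≤ ⟪u, α⟫}

/-- Pointwise stabilizer in `W` of the first `m` coordinates of the tuple `v`. -/
def stabSet (Φ : Set V) {n : ℕ} (v : Fin n → V) (m : ℕ) : Set (V ≃ₗᵢ[ℝ] V) :=
  {w | w ∈ Wgroup Φ ∧ ∀ i : Fin n, (i : ℕ) < m → w (v i) = v i}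

/-- The fundamental region `C⁽ⁿ⁾` for the diagonal `W`-action on `Vⁿ`. -/
def Cfund (Φ : Set V) (Pi : Finset V) (n : ℕ) : Set (Fin n → V) :=
  {v | ∀ m : Fin n, v m ∈ chamber Φ Pi (stabSet Φ v (m : ℕ))}

/-! For `v ∈ C_{Γ'}` choose `u₀, u₁` strictly positive on `Γ`, `Γ'` (possible by linear
independence) and `w ∈ W_Γ` maximizing `⟪v, w u₀⟫`, ties broken by maximizing `⟪u₁, w u₀⟫`;
`W_Γ` is finite since its elements are determined by their action on the finite set `Φ ⊇ Γ`.
Comparing `w` with `w s_γ` for `γ ∈ Γ` puts `w⁻¹ v` in `C_Γ`. If `w⁻¹ γ'` were a negative root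
for some `γ' ∈ Γ'`, then `⟪v, γ'⟫ = ⟪w⁻¹ v, w⁻¹ γ'⟫ ≤ 0`, so `s_{γ'}` fixes `v` and `s_{γ'} w`
ties with `w` in the first criterion while beating it in the second. Conversely, `w⁻¹ γ'` in
the positive cone of `Γ` pairs nonnegatively with `C_Γ`. -/

lemma Finite.exists_max_lex {ι α β : Type*} [Finite ι] [Nonempty ι] [LinearOrder α]
    [LinearOrder β] (f : ι → α) (g : ι → β) :
    ∃ i, ∀ j, f j ≤ f i ∧ (f j = f i → g j ≤ g i) := by
  obtain ⟨i, hi⟩ := Finite.exists_max fun i => toLex (f i, g i)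
  refine ⟨i, fun j => ?_⟩
  rcases Prod.Lex.le_iff.1 (hi j) with h | ⟨h, h'⟩
  · exact ⟨h.le, fun h'' => absurd h'' h.ne⟩
  · exact ⟨h.le, fun _ => h'⟩

section

omit [FiniteDimensional ℝ V]

lemma sref_apply (α v : V) : sref α v = v - (2 * ⟪α, v⟫ / ‖α‖ ^ 2) • α := by
  rw [sref, Submodule.reflection_orthogonal_apply, Submodule.reflection_singleton_apply]
  simp only [RCLike.ofReal_real_eq_id, id_eq]
  module

lemma sref_inv (α : V) : (sref α)⁻¹ = sref α :=
  Submodule.reflection_symm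

lemma inner_sref_left (α x y : V) : ⟪sref α x, y⟫ = ⟪x, sref α y⟫ := by
  rw [LinearIsometryEquiv.inner_map_eq_flip, ← LinearIsometryEquiv.coe_inv, sref_inv]

lemma sref_symm_apply_eq_conj (w : V ≃ₗᵢ[ℝ] V) (α : V) : sref (w.symm α) = w⁻¹ * sref α * w := by
  ext x
  simp only [LinearIsometryEquiv.coe_mul, LinearIsometryEquiv.coe_inv, Function.comp_apply,
    sref_apply, map_sub, map_smul, LinearIsometryEquiv.symm_apply_apply,
    LinearIsometryEquiv.norm_map, LinearIsometryEquiv.inner_map_eq_flip,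
    LinearIsometryEquiv.symm_symm]

lemma sref_mem_Wgroup {S : Set V} {α : V} (hα : α ∈ S) : sref α ∈ Wgroup S :=
  Subgroup.subset_closure ⟨α, hα, rfl⟩

lemma Wgroup_apply_mem {Φ S : Set V} (hrefl : ∀ α ∈ Φ, ∀ β ∈ Φ, sref α β ∈ Φ) (hS : S ⊆ Φ)
    {w : V ≃ₗᵢ[ℝ] V} (hw : w ∈ Wgroup S) {β : V} (hβ : β ∈ Φ) : w β ∈ Φ := by
  induction hw using Subgroup.closure_induction'' generalizing β with
  | mem _ h => obtain ⟨α, hα, rfl⟩ := h; exact hrefl α (hS hα) β hβ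
  | inv_mem _ h => obtain ⟨α, hα, rfl⟩ := h; rw [sref_inv]; exact hrefl α (hS hα) β hβ
  | one => exact hβ
  | mul _ _ _ _ ha hb => exact ha (hb hβ)

lemma Wgroup_apply_of_forall_inner_eq_zero {S : Set V} {w : V ≃ₗᵢ[ℝ] V} (hw : w ∈ Wgroup S)
    {x : V} (hx : ∀ γ ∈ S, ⟪γ, x⟫ = 0) : w x = x := by
  induction hw using Subgroup.closure_induction'' with
  | mem _ h => obtain ⟨α, hα, rfl⟩ := h; simp [sref_apply, hx α hα]
  | inv_mem _ h => obtain ⟨α, hα, rfl⟩ := h; simp [sref_inv, sref_apply, hx α hα]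
  | one => rfl
  | mul _ _ _ _ ha hb => simp [hb, ha]

lemma inner_nonneg_of_mem_posCone {Γ : Finset V} {u α : V} (hu : ∀ γ ∈ Γ, 0 ≤ ⟪u, γ⟫)
    (hα : α ∈ posCone Γ) : 0 ≤ ⟪u, α⟫ := by
  obtain ⟨c, hc, rfl⟩ := hα
  simp only [inner_sum, real_inner_smul_right]
  exact Finset.sum_nonneg fun x hx => mul_nonneg (hc x) (hu x hx)

lemma inner_pos_of_mem_posCone {Γ : Finset V} {u α : V} (hu : ∀ γ ∈ Γ, 0 < ⟪u, γ⟫)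
    (hα : α ∈ posCone Γ) (hα0 : α ≠ 0) : 0 < ⟪u, α⟫ := by
  obtain ⟨c, hc, rfl⟩ := hα
  simp only [inner_sum, real_inner_smul_right] at hα0 ⊢
  have hterm : ∀ x ∈ Γ, 0 ≤ c x * ⟪u, x⟫ := fun x hx => mul_nonneg (hc x) (hu x hx).le
  refine (Finset.sum_nonneg hterm).lt_of_ne fun h => hα0 (Finset.sum_eq_zero fun x hx => ?_)
  have hx0 := (Finset.sum_eq_zero_iff_of_nonneg hterm).1 h.symm x hx
  rw [(mul_eq_zero.1 hx0).resolve_right (hu x hx).ne', zero_smul]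

lemma inner_symm_nonneg_of_forall_le {Γ : Set V} {u₀ v : V} (hu₀ : ∀ γ ∈ Γ, 0 < ⟪u₀, γ⟫)
    {w : V ≃ₗᵢ[ℝ] V} (hw : w ∈ Wgroup Γ) (hmax : ∀ w' ∈ Wgroup Γ, ⟪v, w' u₀⟫ ≤ ⟪v, w u₀⟫) :
    ∀ γ ∈ Γ, 0 ≤ ⟪w.symm v, γ⟫ := by
  intro γ hγ
  have hγ0 : γ ≠ 0 := by rintro rfl; simpa using hu₀ 0 hγ
  have hstep : ⟪v, (w * sref γ) u₀⟫ = ⟪v, w u₀⟫ - 2 * ⟪γ, u₀⟫ / ‖γ‖ ^ 2 * ⟪v, w γ⟫ := by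
    rw [LinearIsometryEquiv.coe_mul, Function.comp_apply, sref_apply, map_sub, map_smul,
      inner_sub_right, real_inner_smul_right]
  have hc : 0 < 2 * ⟪γ, u₀⟫ / ‖γ‖ ^ 2 := by
    have := hu₀ γ hγ
    rw [real_inner_comm] at this
    positivity
  have := hmax _ (mul_mem hw (sref_mem_Wgroup hγ))
  rw [w.symm.inner_map_eq_flip, LinearIsometryEquiv.symm_symm]
  nlinarith

lemma symm_mem_posCone_of_forall_le {Γ : Finset V} {u₀ u₁ v γ' : V} {w : V ≃ₗᵢ[ℝ] V}
    (hu₀ : ∀ γ ∈ Γ, 0 < ⟪u₀, γ⟫) (hu₁ : 0 < ⟪u₁, γ'⟫) (hv : 0 ≤ ⟪v, γ'⟫)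
    (hw : w ∈ Wgroup Γ) (hγ' : sref γ' ∈ Wgroup Γ) (hdom : ∀ γ ∈ Γ, 0 ≤ ⟪w.symm v, γ⟫)
    (hsplit : w.symm γ' ∈ posCone Γ ∨ -w.symm γ' ∈ posCone Γ)
    (hmax : ∀ w' ∈ Wgroup Γ, ⟪v, w' u₀⟫ = ⟪v, w u₀⟫ → ⟪u₁, w' u₀⟫ ≤ ⟪u₁, w u₀⟫) :
    w.symm γ' ∈ posCone Γ := by
  refine hsplit.resolve_right fun hneg => ?_
  have hγ'0 : γ' ≠ 0 := by rintro rfl; simp at hu₁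
  have hv0 : ⟪v, γ'⟫ = 0 := by
    have := inner_nonneg_of_mem_posCone hdom hneg
    rw [inner_neg_right, LinearIsometryEquiv.inner_map_map] at this
    linarith
  have hfix : sref γ' v = v := by simp [sref_apply, real_inner_comm, hv0]
  have hf : ⟪v, (sref γ' * w) u₀⟫ = ⟪v, w u₀⟫ := by
    rw [LinearIsometryEquiv.coe_mul, Function.comp_apply, ← inner_sref_left, hfix]
  have hg : ⟪u₁, (sref γ' * w) u₀⟫
      = ⟪u₁, w u₀⟫ + 2 * ⟪γ', u₁⟫ / ‖γ'‖ ^ 2 * ⟪u₀, -w.symm γ'⟫ := by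
    rw [LinearIsometryEquiv.coe_mul, Function.comp_apply, ← inner_sref_left, sref_apply,
      inner_sub_left, real_inner_smul_left, inner_neg_right, real_inner_comm _ u₀,
      w.symm.inner_map_eq_flip, LinearIsometryEquiv.symm_symm]
    ring
  have hc : 0 < 2 * ⟪γ', u₁⟫ / ‖γ'‖ ^ 2 := by
    rw [real_inner_comm] at hu₁
    have : 0 < ‖γ'‖ := norm_pos_iff.2 hγ'0
    positivity
  have hpos : 0 < ⟪u₀, -w.symm γ'⟫ := inner_pos_of_mem_posCone hu₀ hneg (by simpa using hγ'0)
  have := hmax _ (mul_mem hγ' hw) hf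
  nlinarith

end

lemma LinearIndependent.exists_inner_pos {ι : Type*} {v : ι → V} (h : LinearIndependent ℝ v) :
    ∃ u : V, ∀ i, 0 < ⟪u, v i⟫ := by
  let b := Module.Basis.extend h.linearIndepOn_id
  refine ⟨(InnerProductSpace.toDual ℝ V).symm b.sumCoords.toContinuousLinearMap, fun i => ?_⟩
  have hb : b ⟨v i, h.linearIndepOn_id.subset_extend _ ⟨i, rfl⟩⟩ = v i :=
    Module.Basis.extend_apply_self _ _
  rw [InnerProductSpace.toDual_symm_apply, ← hb]
  exact (b.sumCoords_self_apply _).symm ▸ one_pos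

lemma Wgroup_eq_of_eqOn {S : Set V} {w₁ w₂ : V ≃ₗᵢ[ℝ] V} (h₁ : w₁ ∈ Wgroup S)
    (h₂ : w₂ ∈ Wgroup S) (h : Set.EqOn w₁ w₂ S) : w₁ = w₂ := by
  set K := Submodule.span ℝ S
  have hK : K ≤ LinearMap.eqLocus w₁.toLinearMap w₂.toLinearMap := Submodule.span_le.2 h
  have hKperp : Kᗮ ≤ LinearMap.eqLocus w₁.toLinearMap w₂.toLinearMap := fun x hx => by
    have hx' : ∀ γ ∈ S, ⟪γ, x⟫ = 0 := fun γ hγ =>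
      (Submodule.mem_orthogonal K x).1 hx γ (Submodule.subset_span hγ)
    simp [LinearMap.mem_eqLocus, Wgroup_apply_of_forall_inner_eq_zero h₁ hx',
      Wgroup_apply_of_forall_inner_eq_zero h₂ hx']
  ext x
  have hx : x ∈ K ⊔ Kᗮ := by rw [Submodule.sup_orthogonal_of_hasOrthogonalProjection]; trivial
  exact sup_le hK hKperp hx

lemma Wgroup_finite {Φ S : Set V} (hfin : Φ.Finite) (hrefl : ∀ α ∈ Φ, ∀ β ∈ Φ, sref α β ∈ Φ)
    (hS : S ⊆ Φ) : Finite (Wgroup S) := by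
  have := hfin.to_subtype
  have := (hfin.subset hS).to_subtype
  refine Finite.of_injective (β := S → Φ)
    (fun w s => ⟨w.1 s, Wgroup_apply_mem hrefl hS w.2 (hS s.2)⟩) fun w₁ w₂ h => ?_
  exact Subtype.ext <| Wgroup_eq_of_eqOn w₁.2 w₂.2 fun s hs =>
    congrArg Subtype.val (congrFun h ⟨s, hs⟩)

theorem chamber_union_of_cosets_general (Φ : Set V) (Γ Γ' : Finset V)
    (hfin : Φ.Finite)
    (hrefl : ∀ α ∈ Φ, ∀ β ∈ Φ, sref α β ∈ Φ)
    -- Γ is a simple subsystem of Φ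
    (hΓΦ : (Γ : Set V) ⊆ Φ)
    (hΓind : LinearIndependent ℝ (fun x : {x : V // x ∈ Γ} => (x : V)))
    (hΓsplit : ∀ α ∈ Φ, sref α ∈ Wgroup (Γ : Set V) →
      α ∈ posCone Γ ∨ -α ∈ posCone Γ)
    -- Γ' is a simple subsystem of Φ
    (hΓ'Φ : (Γ' : Set V) ⊆ Φ)
    (hΓ'ind : LinearIndependent ℝ (fun x : {x : V // x ∈ Γ'} => (x : V)))
    -- W_{Γ'} ⊆ W_Γ
    (hWsub : Wgroup (Γ' : Set V) ≤ Wgroup (Γ : Set V)) :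
    {v : V | ∀ γ ∈ Γ', 0 ≤ ⟪v, γ⟫}
      = ⋃ w ∈ {w : V ≃ₗᵢ[ℝ] V | w ∈ Wgroup (Γ : Set V) ∧ ∀ γ ∈ Γ',
            w.symm γ ∈ {α | α ∈ Φ ∧ sref α ∈ Wgroup (Γ : Set V) ∧ α ∈ posCone Γ}},
          (fun x => w x) '' {v : V | ∀ γ ∈ Γ, 0 ≤ ⟪v, γ⟫} := by
  obtain ⟨u₀, hu₀⟩ := hΓind.exists_inner_pos
  obtain ⟨u₁, hu₁⟩ := hΓ'ind.exists_inner_pos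
  ext v
  simp only [Set.mem_iUnion, Set.mem_image]
  constructor
  · intro hv
    have := Wgroup_finite hfin hrefl hΓΦ
    obtain ⟨⟨w, hw⟩, hmax⟩ := Finite.exists_max_lex (ι := Wgroup (Γ : Set V))
      (fun w => ⟪v, w.1 u₀⟫) (fun w => ⟪u₁, w.1 u₀⟫)
    have hdom := inner_symm_nonneg_of_forall_le (fun γ hγ => hu₀ ⟨γ, hγ⟩) hw
      fun w' hw' => (hmax ⟨w', hw'⟩).1
    refine ⟨w, ⟨hw, fun γ' hγ' => ?_⟩, w.symm v, hdom, w.apply_symm_apply v⟩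
    have hβ : w.symm γ' ∈ Φ := by
      rw [← LinearIsometryEquiv.coe_inv]
      exact Wgroup_apply_mem hrefl hΓΦ (inv_mem hw) (hΓ'Φ hγ')
    have hsβ : sref (w.symm γ') ∈ Wgroup (Γ : Set V) := by
      rw [sref_symm_apply_eq_conj]
      exact mul_mem (mul_mem (inv_mem hw) (hWsub (sref_mem_Wgroup hγ'))) hw
    exact ⟨hβ, hsβ, symm_mem_posCone_of_forall_le (fun γ hγ => hu₀ ⟨γ, hγ⟩) (hu₁ ⟨γ', hγ'⟩)
      (hv γ' hγ') hw (hWsub (sref_mem_Wgroup hγ')) hdom (hΓsplit _ hβ hsβ)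
      fun w' hw' => (hmax ⟨w', hw'⟩).2⟩
  · rintro ⟨w, ⟨-, hw⟩, u, hu, rfl⟩ γ' hγ'
    rw [LinearIsometryEquiv.inner_map_eq_flip]
    exact inner_nonneg_of_mem_posCone hu (hw γ' hγ').2.2

/-- If `Γ, Γ'` are simple subsystems of `Φ` with `W_{Γ'} ⊆ W_Γ` and
`Φ_{Γ',+} ⊆ Φ_{Γ,+}`, then `C_{Γ'}` is the union of the images `w(C_Γ)` over the
minimal coset representatives `w ∈ W_Γ` with `w⁻¹(Γ') ⊆ Φ_{W_Γ,+}`. -/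
theorem chamber_union_of_cosets (Φ : Set V) (Γ Γ' : Finset V)
    (hfin : Φ.Finite) (h0 : (0 : V) ∉ Φ)
    (hrefl : ∀ α ∈ Φ, ∀ β ∈ Φ, sref α β ∈ Φ)
    (hred : ∀ α ∈ Φ, ∀ c : ℝ, c • α ∈ Φ → c = 1 ∨ c = -1)
    -- Γ is a simple subsystem of Φ
    (hΓΦ : (Γ : Set V) ⊆ Φ)
    (hΓind : LinearIndependent ℝ (fun x : {x : V // x ∈ Γ} => (x : V)))
    (hΓsplit : ∀ α ∈ Φ, sref α ∈ Wgroup (Γ : Set V) →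
      α ∈ posCone Γ ∨ -α ∈ posCone Γ)
    -- Γ' is a simple subsystem of Φ
    (hΓ'Φ : (Γ' : Set V) ⊆ Φ)
    (hΓ'ind : LinearIndependent ℝ (fun x : {x : V // x ∈ Γ'} => (x : V)))
    (hΓ'split : ∀ α ∈ Φ, sref α ∈ Wgroup (Γ' : Set V) →
      α ∈ posCone Γ' ∨ -α ∈ posCone Γ')
    -- W_{Γ'} ⊆ W_Γ
    (hWsub : Wgroup (Γ' : Set V) ≤ Wgroup (Γ : Set V))
    -- Φ_{Γ',+} ⊆ Φ_{Γ,+}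
    (hpos : {α | α ∈ Φ ∧ sref α ∈ Wgroup (Γ' : Set V) ∧ α ∈ posCone Γ'}
       ⊆ {α | α ∈ Φ ∧ sref α ∈ Wgroup (Γ : Set V) ∧ α ∈ posCone Γ}) :
    {v : V | ∀ γ ∈ Γ', 0 ≤ ⟪v, γ⟫}
      = ⋃ w ∈ {w : V ≃ₗᵢ[ℝ] V | w ∈ Wgroup (Γ : Set V) ∧ ∀ γ ∈ Γ',
            w.symm γ ∈ {α | α ∈ Φ ∧ sref α ∈ Wgroup (Γ : Set V) ∧ α ∈ posCone Γ}},
          (fun x => w x) '' {v : V | ∀ γ ∈ Γ, 0 ≤ ⟪v, γ⟫} :=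
  chamber_union_of_cosets_general Φ Γ Γ' hfin hrefl hΓΦ hΓind hΓsplit hΓ'Φ hΓ'ind hWsub
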